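/- arXiv:1404.1457 — 2 statements merged into one kernel-verified Lean document; each statement's English description precedes it below -/
import Mathlib

section
/- Let π be a permutation of {1,…,n}, and let 1 ≤ a < b ≤ n. If b precedes a in π (i.e. π^{-1}(b) < π^{-1}(a)), then a precedes b in T(π) (i.e. T(π)^{-1}(a) < T(π)^{-1}(b)). -/
/-! Reversing `π` turns the inversion `b … a` into the non-inversion `a … b`, and stack sorting
never destroys a non-inversion `a < b`: in `S(L m R) = S(L) S(R) m` the letters of `L` stay before
those of `R`, a pair inside `L` or `R` is handled recursively, and `a` is never the maximum `m`.
In a word without repeated letters, "`x` precedes `y`" is the same as "`[x, y]` is a sublist",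
which turns the recursion into a case split on how `[x, y]` splits over `L ++ m :: R`. -/

private theorem length_takeWhile_ne_lt {w : List ℕ} {m : ℕ} (hm : m ∈ w) :
    (w.takeWhile (· ≠ m)).length < w.length := by
  induction w with
  | nil => cases hm
  | cons a as ih =>
    by_cases ha : a = m
    · subst ha
      simp [List.takeWhile_cons]
    · rw [List.takeWhile_cons_of_pos (by simpa using ha)]
      have hm' : m ∈ as := by
        rcases List.mem_cons.mp hm with h | h
        · exact absurd h.symm ha
        · exact h
      simpa using Nat.succ_lt_succ (ih hm')

private theorem length_tail_dropWhile_lt {w : List ℕ} (hw : w ≠ []) (p : ℕ → Bool) :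
    ((w.dropWhile p).tail).length < w.length := by
  cases hd : w.dropWhile p with
  | nil => simpa using List.length_pos_iff.mpr hw
  | cons x xs =>
    have h1 : (x :: xs).length ≤ w.length := by
      rw [← hd]; exact (List.dropWhile_sublist p).length_le
    simp only [List.tail_cons]
    exact lt_of_lt_of_le (by simp) h1

/-- The classical stack sort operator on words: `S(ε) = ε` and `S(L m R) = S(L) S(R) m`,
where `m` is the largest entry of the word `L m R`. -/
def stackSort : List ℕ → List ℕ
  | [] => []
  | a :: as =>
    let m := ((a :: as).max?).getD 0
    stackSort ((a :: as).takeWhile (· ≠ m)) ++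
      stackSort (((a :: as).dropWhile (· ≠ m)).tail) ++ [m]
termination_by w => w.length
decreasing_by
  · refine length_takeWhile_ne_lt ?_
    have : (a :: as).max? = some (((a :: as).max?).getD 0) := by
      cases h : (a :: as).max? with
      | none => simp [List.max?_eq_none_iff] at h
      | some b => simp
    exact List.max?_mem this
  · exact length_tail_dropWhile_lt (by simp) _

/-- The revstack sort operator `T = S ∘ rev`. -/
def revstackSort (w : List ℕ) : List ℕ := stackSort w.reverse

/-- The word of the identity permutation of `{1,…,n}`, namely `1 2 ⋯ n`. -/
def idPerm (n : ℕ) : List ℕ := List.range' 1 n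

/-- `w` is (the word of) a permutation of `{1,…,n}`. -/
def IsPermWord (n : ℕ) (w : List ℕ) : Prop := w.Perm (idPerm n)

/-- `x` precedes `y` in the word `w`, i.e. the position of `x` is smaller than that of `y`. -/
def Precedes (w : List ℕ) (x y : ℕ) : Prop := w.idxOf x < w.idxOf y

/-- `w` contains an occurrence of the pattern `132`: values `a < b < c` occurring in
the order `a, c, b`. -/
def Contains132 (w : List ℕ) : Prop :=
  ∃ a b c, a ∈ w ∧ b ∈ w ∧ c ∈ w ∧ a < b ∧ b < c ∧ Precedes w a c ∧ Precedes w c b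

/-- `w` contains an occurrence of the pattern `2431`: values `a < b < c < d` occurring in
the order `b, d, c, a`. -/
def Contains2431 (w : List ℕ) : Prop :=
  ∃ a b c d, a ∈ w ∧ b ∈ w ∧ c ∈ w ∧ d ∈ w ∧ a < b ∧ b < c ∧ c < d ∧
    Precedes w b d ∧ Precedes w d c ∧ Precedes w c a

/-- `w` contains an occurrence of the barred pattern `241 5̄ 3`: values `a < b < c < d`
occurring in the order `b, d, a, c` with no value `e > d` lying between `a` and `c` in `w`. -/
def ContainsBarred24153 (w : List ℕ) : Prop :=
  ∃ a b c d, a ∈ w ∧ b ∈ w ∧ c ∈ w ∧ d ∈ w ∧ a < b ∧ b < c ∧ c < d ∧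
    Precedes w b d ∧ Precedes w d a ∧ Precedes w a c ∧
    ¬ ∃ e, e ∈ w ∧ d < e ∧ Precedes w a e ∧ Precedes w e c

/-- The number of descents of a word. -/
def des (w : List ℕ) : ℕ := ((w.zip w.tail).filter (fun p => p.2 < p.1)).length

/-- The finset of all words of permutations of `{1,…,n}`. -/
def permsOf (n : ℕ) : Finset (List ℕ) := (idPerm n).permutations.toFinset

/-- The finset of `t`-revstack sortable permutations of `{1,…,n}`. -/
def revstackSortable (n t : ℕ) : Finset (List ℕ) :=
  (permsOf n).filter (fun w => revstackSort^[t] w = idPerm n)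

/-- The finset of `t`-stack sortable permutations of `{1,…,n}`. -/
def stackSortable (n t : ℕ) : Finset (List ℕ) :=
  (permsOf n).filter (fun w => stackSort^[t] w = idPerm n)

/-- The descent polynomial `W(A;x) = ∑_{π ∈ A} x^{1+des(π)}` of a set of permutations. -/
noncomputable def descPoly (A : Finset (List ℕ)) : Polynomial ℚ :=
  ∑ w ∈ A, Polynomial.X ^ (1 + des w)

/-- The `m`-th Eulerian polynomial `A_m(x) = ∑_{π ∈ S_m} x^{1+des(π)}`, with `A_0(x) = 1`. -/
noncomputable def eulerianPoly (m : ℕ) : Polynomial ℚ :=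
  if m = 0 then 1 else descPoly (permsOf m)

/-- `v_t(n,i)`: the number of `t`-revstack sortable permutations of `{1,…,n}`
with exactly `i` descents. -/
def vNum (t n i : ℕ) : ℕ := ((revstackSortable n t).filter (fun w => des w = i)).card

/-- `w_t(n,i)`: the number of `t`-stack sortable permutations of `{1,…,n}`
with exactly `i` descents. -/
def wNum (t n i : ℕ) : ℕ := ((stackSortable n t).filter (fun w => des w = i)).card

namespace List

variable {α : Type*} [DecidableEq α]

theorem Nodup.pair_sublist_iff_idxOf_lt {l : List α} (hl : l.Nodup) {x y : α} (hy : y ∈ l) :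
    [x, y] <+ l ↔ l.idxOf x < l.idxOf y := by
  constructor
  · intro h
    obtain ⟨r₁, r₂, rfl, hx, hy₂⟩ := cons_sublist_iff.mp h
    have hy₁ : y ∉ r₁ := fun hy₁ =>
      (nodup_append.mp hl).2.2 y hy₁ y (singleton_sublist.mp hy₂) rfl
    rw [idxOf_append_of_mem hx, idxOf_append_of_notMem hy₁]
    have := idxOf_lt_length_of_mem hx
    omega
  · intro h
    have hx : x ∈ l := idxOf_lt_length_iff.mp (h.trans_le idxOf_le_length)
    refine cons_sublist_iff.mpr ⟨l.take (l.idxOf y), l.drop (l.idxOf y),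
      (take_append_drop _ _).symm, (mem_take_iff_idxOf_lt hx).mpr h, ?_⟩
    rw [drop_eq_getElem_cons (idxOf_lt_length_of_mem hy), getElem_idxOf]
    exact (nil_sublist _).cons_cons y

end List

open List

theorem stackSort_append_cons {L R : List ℕ} {m : ℕ} (hmL : m ∉ L)
    (hmax : ∀ x ∈ L ++ m :: R, x ≤ m) :
    stackSort (L ++ m :: R) = stackSort L ++ stackSort R ++ [m] := by
  have hmax? : (L ++ m :: R).max? = some m := max?_eq_some_iff.mpr ⟨by simp, hmax⟩
  have hL : ∀ x ∈ L, (!decide (x = m)) = true := fun x hx => by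
    simpa using ne_of_mem_of_not_mem hx hmL
  obtain ⟨x, xs, hw⟩ := exists_cons_of_ne_nil (append_ne_nil_of_right_ne_nil L (cons_ne_nil m R))
  rw [hw, stackSort, ← hw]
  simp [hmax?, takeWhile_append_of_pos hL, dropWhile_append_of_pos hL]

theorem stackSort_induction {P : List ℕ → Prop} (nil : P [])
    (append_cons : ∀ L m R, m ∉ L → (∀ x ∈ L ++ m :: R, x ≤ m) → P L → P R → P (L ++ m :: R))
    (w : List ℕ) : P w := by
  induction hn : w.length using Nat.strong_induction_on generalizing w with
  | _ n ih =>
  obtain rfl | hw := eq_or_ne w []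
  · exact nil
  obtain ⟨m, hm⟩ := Option.isSome_iff_exists.mp (isSome_max?_of_ne_nil hw)
  obtain ⟨hmw, hmax⟩ := max?_eq_some_iff.mp hm
  have hi := idxOf_lt_length_of_mem hmw
  have hsplit : w = w.take (w.idxOf m) ++ m :: w.drop (w.idxOf m + 1) := by
    conv_lhs => rw [← take_append_drop (w.idxOf m) w]
    rw [drop_eq_getElem_cons hi, getElem_idxOf]
  rw [hsplit] at hmax ⊢
  refine append_cons _ _ _ (fun h => ?_) hmax (ih _ ?_ _ rfl) (ih _ ?_ _ rfl)
  · exact lt_irrefl _ ((mem_take_iff_idxOf_lt hmw).mp h)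
  · rw [← hn, length_take]; omega
  · rw [← hn, length_drop]; omega

theorem stackSort_perm (w : List ℕ) : stackSort w ~ w := by
  induction w using stackSort_induction with
  | nil => simp [stackSort]
  | append_cons L m R hmL hmax hL hR =>
    rw [stackSort_append_cons hmL hmax, append_assoc]
    exact hL.append ((hR.append_right [m]).trans (perm_append_singleton m R))

theorem pair_sublist_stackSort {a b : ℕ} (hab : a < b) {w : List ℕ} (h : [a, b] <+ w) :
    [a, b] <+ stackSort w := by
  induction w using stackSort_induction with
  | nil => simp at h
  | append_cons L m R hmL hmax ihL ihR =>
    rw [stackSort_append_cons hmL hmax, append_assoc]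
    obtain ⟨l₁, l₂, hsplit, h₁, h₂⟩ := sublist_append_iff.mp h
    match l₁, l₂, hsplit with
    | [], _, rfl =>
      rcases sublist_cons_iff.mp h₂ with hR | ⟨_, hcons, hbR⟩
      · exact (ihR hR).trans ((sublist_append_left _ _).trans (sublist_append_right _ _))
      · obtain ⟨rfl, rfl⟩ := cons_eq_cons.mp hcons
        -- `a` would be the maximum `m` of the word, yet `b > a` occurs in it
        have hbm := hmax b (by simp [singleton_sublist.mp hbR])
        omega
    | [_], _, rfl =>
      have haL := singleton_sublist.mp h₁
      have hbmR := singleton_sublist.mp h₂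
      refine (singleton_sublist.mpr ?_).append (singleton_sublist.mpr ?_)
      · simpa [(stackSort_perm L).mem_iff] using haL
      · simpa [(stackSort_perm R).mem_iff, or_comm] using hbmR
    | [_, _], [], rfl => exact (ihL h₁).trans (sublist_append_left _ _)

theorem inversion_becomes_noninversion_under_revstack
    (n : ℕ) (π : List ℕ) (hπ : IsPermWord n π) (a b : ℕ)
    (ha : 1 ≤ a) (hab : a < b) (hb : b ≤ n)
    (h : Precedes π b a) :
    Precedes (revstackSort π) a b := by
  have hπnd : π.Nodup := hπ.nodup_iff.mpr nodup_range'
  have haπ : a ∈ π := hπ.mem_iff.mpr (mem_range'_1.mpr ⟨ha, by omega⟩)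
  have hba : [b, a] <+ π := (hπnd.pair_sublist_iff_idxOf_lt haπ).mpr h
  have hsorted : [a, b] <+ revstackSort π := pair_sublist_stackSort hab (reverse_sublist.mpr hba)
  have hsortedNodup : (revstackSort π).Nodup :=
    (stackSort_perm _).nodup_iff.mpr (nodup_reverse.mpr hπnd)
  exact (hsortedNodup.pair_sublist_iff_idxOf_lt (hsorted.subset (by simp))).mp hsorted
end

section
/- For every n ≥ 2, the polynomial D_n(x) = Σ_{π ∈ S_n, π^{-1}(n) > π^{-1}(n−1)} x^{1+des(π)} (the descent polynomial over permutations of length n in which n occurs to the right of n−1) satisfies D_n(x) = (1/2)·Σ_{i=0}^{n−1} C(n−1,i)·A_i(x)·A_{n−1−i}(x), where A_m(x) is the m-th Eulerian polynomial. -/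
/-!
Split `w ∈ S_n` at its largest letter, `w = σ n τ`. When `n - 1` lies in `σ`, the word `σ` is
nonempty, and as `n` is entered by an ascent and left by a descent,
`1 + des w = (1 + des σ) + (1 + des τ)` (reading `1 + des [] = 0`). Summing over the set
`S ⊆ {1, …, n-1}` of letters of `σ`, and standardizing `σ` and `τ`, the contribution of `S` is
`A_{|S|} A_{n-1-|S|}`. Replacing `S` by its complement exchanges `n - 1 ∈ S` with `n - 1 ∉ S` and
leaves this product unchanged, so `D_n` is half the sum over all `S`, which is
`∑ C(n-1, i) A_i A_{n-1-i}`.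
-/

open Finset Polynomial

theorem des_cons_cons (a b : ℕ) (t : List ℕ) :
    des (a :: b :: t) = (if b < a then 1 else 0) + des (b :: t) := by
  simp only [des, List.tail_cons, List.zip_cons_cons, List.filter_cons]
  by_cases h : b < a <;> simp [h, Nat.add_comm]

theorem des_map_of_strictMonoOn {f : ℕ → ℕ} {S : Set ℕ} (hf : StrictMonoOn f S) :
    ∀ {w : List ℕ}, (∀ x ∈ w, x ∈ S) → des (w.map f) = des w
  | [], _ => rfl
  | [_], _ => rfl
  | a :: b :: t, hw => by
    have hlt : f b < f a ↔ b < a := hf.lt_iff_lt (hw b (by simp)) (hw a (by simp))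
    have ih := des_map_of_strictMonoOn hf (w := b :: t) fun x hx => hw x (by simp [hx])
    simp only [List.map_cons] at ih ⊢
    simp only [des_cons_cons, ih, hlt]

/-- `x ^ ascRuns w` is the weight of `w` in the Eulerian polynomials, the empty word included
(`A_0 = 1`). -/
def ascRuns (w : List ℕ) : ℕ := if w = [] then 0 else 1 + des w

theorem ascRuns_map_of_strictMonoOn {f : ℕ → ℕ} {S : Set ℕ} (hf : StrictMonoOn f S)
    {w : List ℕ} (hw : ∀ x ∈ w, x ∈ S) : ascRuns (w.map f) = ascRuns w := by
  simp only [ascRuns, List.map_eq_nil_iff, des_map_of_strictMonoOn hf hw]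

theorem des_cons_of_forall_lt {n : ℕ} {τ : List ℕ} (hτ : ∀ x ∈ τ, x < n) :
    des (n :: τ) = ascRuns τ := by
  cases τ with
  | nil => rfl
  | cons b t => rw [des_cons_cons, if_pos (hτ b (by simp)), ascRuns, if_neg (by simp)]

theorem des_append_cons_of_forall_lt {n : ℕ} (τ : List ℕ) :
    ∀ {σ : List ℕ}, σ ≠ [] → (∀ x ∈ σ, x < n) → des (σ ++ n :: τ) = des σ + des (n :: τ)
  | [a], _, hσ => by
    rw [List.singleton_append, des_cons_cons, if_neg (by simpa using (hσ a (by simp)).le)]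
    rfl
  | a :: b :: t, _, hσ => by
    have ih := des_append_cons_of_forall_lt τ (σ := b :: t) (by simp)
      fun x hx => hσ x (by simp [hx])
    simp only [List.cons_append] at ih ⊢
    rw [des_cons_cons, ih, des_cons_cons, Nat.add_assoc]

theorem one_add_des_append_cons {n : ℕ} {σ τ : List ℕ} (hσ : σ ≠ [])
    (hσn : ∀ x ∈ σ, x < n) (hτn : ∀ x ∈ τ, x < n) :
    1 + des (σ ++ n :: τ) = ascRuns σ + ascRuns τ := by
  rw [des_append_cons_of_forall_lt τ hσ hσn, des_cons_of_forall_lt hτn,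
    show ascRuns σ = 1 + des σ from if_neg hσ, Nat.add_assoc]

theorem idxOf_lt_idxOf_append_cons_iff {α : Type*} [BEq α] [LawfulBEq α] {a b : α}
    {σ τ : List α} (hb : b ∉ σ) :
    (σ ++ b :: τ).idxOf a < (σ ++ b :: τ).idxOf b ↔ a ∈ σ := by
  rw [List.idxOf_append_of_notMem hb, List.idxOf_cons_self, Nat.add_zero]
  by_cases ha : a ∈ σ
  · simp [ha, List.idxOf_append_of_mem ha, List.idxOf_lt_length_iff]
  · simp [ha, List.idxOf_append_of_notMem ha]

def permsOn (S : Finset ℕ) : Finset (List ℕ) := (S.sort (· ≤ ·)).permutations.toFinset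

theorem mem_permutations_toFinset_iff {α : Type*} [DecidableEq α] {l w : List α} (hl : l.Nodup) :
    w ∈ l.permutations.toFinset ↔ w.Nodup ∧ w.toFinset = l.toFinset := by
  rw [List.mem_toFinset, List.mem_permutations]
  exact ⟨fun h => ⟨h.nodup_iff.2 hl, List.toFinset_eq_of_perm _ _ h⟩,
    fun ⟨hw, he⟩ => List.perm_of_nodup_nodup_toFinset_eq hw hl he⟩

theorem mem_permsOn {S : Finset ℕ} {w : List ℕ} : w ∈ permsOn S ↔ w.Nodup ∧ w.toFinset = S := by
  rw [permsOn, mem_permutations_toFinset_iff (sort_nodup _ _), sort_toFinset]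

theorem permsOf_eq_permsOn (n : ℕ) : permsOf n = permsOn (Icc 1 n) := by
  ext w
  rw [permsOf, idPerm, mem_permutations_toFinset_iff List.nodup_range', mem_permsOn,
    List.toFinset_range'_1_1]

theorem mem_iff_of_mem_permsOn {S : Finset ℕ} {w : List ℕ} (hw : w ∈ permsOn S) {x : ℕ} :
    x ∈ w ↔ x ∈ S := by
  rw [← List.mem_toFinset, (mem_permsOn.1 hw).2]

theorem map_mem_permsOn_image {S : Finset ℕ} {f : ℕ → ℕ} (hf : Set.InjOn f S) {w : List ℕ}
    (hw : w ∈ permsOn S) : w.map f ∈ permsOn (S.image f) := by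
  refine mem_permsOn.2 ⟨(mem_permsOn.1 hw).1.map_on fun x hx y hy =>
    hf ((mem_iff_of_mem_permsOn hw).1 hx) ((mem_iff_of_mem_permsOn hw).1 hy), ?_⟩
  ext y
  simp [← (mem_permsOn.1 hw).2]

theorem map_map_eq_self_of_leftInvOn {S : Finset ℕ} {f g : ℕ → ℕ} (h : Set.LeftInvOn g f S)
    {w : List ℕ} (hw : w ∈ permsOn S) : (w.map f).map g = w := by
  rw [List.map_map]
  exact (List.map_congr_left fun x hx => h ((mem_iff_of_mem_permsOn hw).1 hx)).trans (List.map_id w)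

theorem sum_permsOn_image {M : Type*} [AddCommMonoid M] {S : Finset ℕ} {f : ℕ → ℕ}
    (hf : StrictMonoOn f S) (φ : ℕ → M) :
    ∑ w ∈ permsOn (S.image f), φ (ascRuns w) = ∑ w ∈ permsOn S, φ (ascRuns w) := by
  set g := Function.invFunOn f (S : Set ℕ)
  have hgf : Set.LeftInvOn g f S := hf.injOn.leftInvOn_invFunOn
  have hfg : Set.LeftInvOn f g (S.image f) := by
    rintro _ hy
    obtain ⟨x, hx, rfl⟩ := mem_image.1 hy
    rw [hgf hx]
  have hgS : (S.image f).image g = S := by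
    rw [image_image]
    exact (image_congr fun x hx => hgf hx).trans image_id
  symm
  refine sum_nbij' (List.map f) (List.map g) (fun w hw => map_mem_permsOn_image hf.injOn hw)
    (fun v hv => hgS ▸ map_mem_permsOn_image hfg.injOn hv)
    (fun w hw => map_map_eq_self_of_leftInvOn hgf hw)
    (fun v hv => map_map_eq_self_of_leftInvOn hfg hv) fun w hw => ?_
  rw [ascRuns_map_of_strictMonoOn hf fun x hx => (mem_iff_of_mem_permsOn hw).1 hx]

theorem eulerianPoly_eq_sum_permsOf (k : ℕ) :
    eulerianPoly k = ∑ w ∈ permsOf k, (X : ℚ[X]) ^ ascRuns w := by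
  rcases Nat.eq_zero_or_pos k with rfl | hk
  · simp [eulerianPoly, permsOf, idPerm, ascRuns]
  · rw [eulerianPoly, if_neg hk.ne', descPoly]
    refine sum_congr rfl fun w hw => ?_
    have hlen : w.length = k := (List.mem_permutations.1 (List.mem_toFinset.1 hw)).length_eq.trans
      List.length_range'
    rw [ascRuns, if_neg (List.ne_nil_of_length_pos (hlen ▸ hk))]

theorem strictMonoOn_card_filter_le (S : Finset ℕ) :
    StrictMonoOn (fun x => #{y ∈ S | y ≤ x}) S := by
  intro x hx y hy hxy
  refine card_lt_card ((ssubset_iff_of_subset fun z hz => ?_).2 ⟨y, ?_, ?_⟩)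
  · simp only [mem_filter] at hz ⊢
    exact ⟨hz.1, hz.2.trans hxy.le⟩
  · simpa using hy
  · simp only [mem_filter, not_and, not_le]
    exact fun _ => hxy

theorem image_card_filter_le (S : Finset ℕ) :
    S.image (fun x => #{y ∈ S | y ≤ x}) = Icc 1 #S := by
  refine eq_of_subset_of_card_le (fun r hr => ?_) ?_
  · obtain ⟨x, hx, rfl⟩ := mem_image.1 hr
    exact mem_Icc.2 ⟨card_pos.2 ⟨x, by simpa using hx⟩, card_filter_le _ _⟩
  · rw [card_image_of_injOn (strictMonoOn_card_filter_le S).injOn, Nat.card_Icc,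
      Nat.add_sub_cancel]

/-- Relabel each letter by its rank in `S`, an order isomorphism `S ≃o {1, …, #S}`. -/
theorem sum_permsOn_X_pow_ascRuns (S : Finset ℕ) :
    ∑ w ∈ permsOn S, (X : ℚ[X]) ^ ascRuns w = eulerianPoly #S := by
  rw [← sum_permsOn_image (strictMonoOn_card_filter_le S) (X ^ ·), image_card_filter_le,
    ← permsOf_eq_permsOn, eulerianPoly_eq_sum_permsOf]

theorem append_cons_mem_permsOn_insert_iff {U : Finset ℕ} {n : ℕ} (hn : n ∉ U) {σ τ : List ℕ} :
    σ ++ n :: τ ∈ permsOn (insert n U) ↔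
      σ.toFinset ⊆ U ∧ σ ∈ permsOn σ.toFinset ∧ τ ∈ permsOn (U \ σ.toFinset) := by
  simp only [mem_permsOn, and_true]
  rw [List.nodup_middle, List.nodup_cons, List.nodup_append]
  simp only [Finset.ext_iff, Finset.subset_iff, List.mem_toFinset, List.toFinset_append,
    List.toFinset_cons, mem_union, mem_insert, mem_sdiff, List.mem_append]
  grind

theorem sum_permsOn_insert {M : Type*} [AddCommMonoid M] {U : Finset ℕ} {n : ℕ} (hn : n ∉ U)
    (f : List ℕ → M) :
    ∑ w ∈ permsOn (insert n U), f w =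
      ∑ S ∈ U.powerset, ∑ p ∈ permsOn S ×ˢ permsOn (U \ S), f (p.1 ++ n :: p.2) := by
  have hnotMem : ∀ {S σ}, S ⊆ U → σ ∈ permsOn S → n ∉ σ := fun hS hσ h =>
    hn (hS ((mem_iff_of_mem_permsOn hσ).1 h))
  rw [sum_sigma']
  symm
  refine sum_bij (fun p _ => p.2.1 ++ n :: p.2.2) ?_ ?_ ?_ fun _ _ => rfl
  · rintro ⟨S, σ, τ⟩ hp
    simp only [mem_sigma, mem_powerset, mem_product] at hp
    obtain ⟨hS, hσ, hτ⟩ := hp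
    rw [← (mem_permsOn.1 hσ).2] at hS hτ
    exact (append_cons_mem_permsOn_insert_iff hn).2 ⟨hS, (mem_permsOn.1 hσ).2 ▸ hσ, hτ⟩
  · rintro ⟨S, σ, τ⟩ hp ⟨S', σ', τ'⟩ hp' h
    simp only [mem_sigma, mem_powerset, mem_product] at hp hp'
    have hnτ : n ∉ τ := hnotMem sdiff_subset hp.2.2
    obtain ⟨rfl, -, rfl⟩ := (List.append_cons_inj_of_notMem (hnotMem hp.1 hp.2.1) hnτ).1 h
    rw [← (mem_permsOn.1 hp.2.1).2, ← (mem_permsOn.1 hp'.2.1).2]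
  · intro w hw
    obtain ⟨σ, τ, rfl⟩ := List.append_of_mem
      (List.mem_toFinset.1 ((mem_permsOn.1 hw).2 ▸ mem_insert_self n U))
    obtain ⟨hσU, hσ, hτ⟩ := (append_cons_mem_permsOn_insert_iff hn).1 hw
    exact ⟨⟨σ.toFinset, σ, τ⟩, by simpa [hσU, hσ] using hτ, rfl⟩

theorem two_nsmul_sum_powerset_filter_mem {α M : Type*} [DecidableEq α] [AddCommMonoid M]
    {U : Finset α} {a : α} (ha : a ∈ U) (f : Finset α → M) (hf : ∀ S ⊆ U, f (U \ S) = f S) :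
    2 • ∑ S ∈ U.powerset with a ∈ S, f S = ∑ S ∈ U.powerset, f S := by
  have hcompl : ∑ S ∈ U.powerset with a ∈ S, f S = ∑ S ∈ U.powerset with a ∉ S, f S := by
    refine sum_nbij' (U \ ·) (U \ ·) ?_ ?_ ?_ ?_ ?_ <;> simp only [mem_filter, mem_powerset]
    · exact fun S hS => ⟨sdiff_subset, fun h => (mem_sdiff.1 h).2 hS.2⟩
    · exact fun S hS => ⟨sdiff_subset, mem_sdiff.2 ⟨ha, hS.2⟩⟩
    · exact fun S hS => Finset.sdiff_sdiff_eq_self hS.1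
    · exact fun S hS => Finset.sdiff_sdiff_eq_self hS.1
    · exact fun S hS => (hf S hS.1).symm
  rw [two_nsmul, ← sum_filter_add_sum_filter_not U.powerset (a ∈ ·), ← hcompl]

theorem descPoly_filter_idxOf_lt {n : ℕ} (hn : 2 ≤ n) :
    descPoly ((permsOf n).filter (fun w => w.idxOf (n - 1) < w.idxOf n)) =
      ∑ S ∈ (Icc 1 (n - 1)).powerset with n - 1 ∈ S,
        eulerianPoly #S * eulerianPoly #(Icc 1 (n - 1) \ S) := by
  set U := Icc 1 (n - 1)
  have hnU : n ∉ U := by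
    simp only [U, mem_Icc]
    omega
  have hU : insert n U = Icc 1 n := by
    ext x
    simp only [U, mem_insert, mem_Icc]
    omega
  rw [descPoly, sum_filter, permsOf_eq_permsOn, ← hU, sum_permsOn_insert hnU, sum_filter]
  refine sum_congr rfl fun S hS => ?_
  have hSU := mem_powerset.1 hS
  have hlt : ∀ {T}, T ⊆ U → ∀ {w}, w ∈ permsOn T → ∀ x ∈ w, x < n := fun hT _ hw x hx => by
    have := mem_Icc.1 (hT ((mem_iff_of_mem_permsOn hw).1 hx))
    omega
  have hnσ : ∀ {σ}, σ ∈ permsOn S → n ∉ σ := fun hσ h => (hlt hSU hσ n h).false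
  split_ifs with h
  · rw [← sum_permsOn_X_pow_ascRuns, ← sum_permsOn_X_pow_ascRuns, sum_mul_sum, sum_product]
    refine sum_congr rfl fun σ hσ => sum_congr rfl fun τ hτ => ?_
    have hmem : n - 1 ∈ σ := (mem_iff_of_mem_permsOn hσ).2 h
    rw [if_pos ((idxOf_lt_idxOf_append_cons_iff (hnσ hσ)).2 hmem),
      one_add_des_append_cons (List.ne_nil_of_mem hmem) (hlt hSU hσ) (hlt sdiff_subset hτ),
      pow_add]
  · refine sum_eq_zero fun p hp => if_neg ?_
    rw [idxOf_lt_idxOf_append_cons_iff (hnσ (mem_product.1 hp).1),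
      mem_iff_of_mem_permsOn (mem_product.1 hp).1]
    exact h

theorem dPoly_formula
    (n : ℕ) (hn : 2 ≤ n) :
    descPoly ((permsOf n).filter (fun w => w.idxOf (n - 1) < w.idxOf n)) =
      Polynomial.C (1 / 2 : ℚ) *
        ∑ i ∈ Finset.range n,
          (Nat.choose (n - 1) i : Polynomial ℚ) *
            (eulerianPoly i * eulerianPoly (n - 1 - i)) := by
  rw [descPoly_filter_idxOf_lt hn]
  set U := Icc 1 (n - 1)
  have hU : #U = n - 1 := by simp [U]
  have hsymm : ∀ S ⊆ U, eulerianPoly #(U \ S) * eulerianPoly #(U \ (U \ S)) =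
      eulerianPoly #S * eulerianPoly #(U \ S) := fun S hS => by
    rw [Finset.sdiff_sdiff_eq_self hS, mul_comm]
  have htotal : ∑ S ∈ U.powerset, eulerianPoly #S * eulerianPoly #(U \ S) =
      ∑ i ∈ range n, ((n - 1).choose i : ℚ[X]) * (eulerianPoly i * eulerianPoly (n - 1 - i)) := by
    rw [sum_congr rfl fun S hS => by rw [card_sdiff_of_subset (mem_powerset.1 hS), hU],
      sum_powerset_apply_card (fun i => eulerianPoly i * eulerianPoly (n - 1 - i)), hU,
      Nat.sub_add_cancel (by omega)]
    simp only [nsmul_eq_mul]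
  have hmem : n - 1 ∈ U := mem_Icc.2 ⟨by omega, le_rfl⟩
  rw [← htotal, ← two_nsmul_sum_powerset_filter_mem hmem _ hsymm,
    nsmul_eq_mul, ← mul_assoc, Nat.cast_ofNat, ← map_ofNat C 2, ← C_mul]
  norm_num
end
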